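/- arXiv:2102.01575 — 3 statements merged into one kernel-verified Lean document; each statement's English description precedes it below -/
import Mathlib

section
/- Let R be a commutative Noetherian local ring and M a nonzero finitely generated R-module. If depth_R(I, M) ≤ depth_R(I, R) for every ideal I of R, then every M-regular sequence x_1, ..., x_n of elements of the maximal ideal is also an R-regular sequence. -/
/-!
Induct along the sequence. If `x₁, …, xₙ` is `R`-regular but `xₙ₊₁` is a zerodivisor on
`R/(x₁, …, xₙ)`, then `xₙ₊₁` lies in an associated prime `p` of `R/(x₁, …, xₙ)`, which also
contains `x₁, …, xₙ`. So `x₁, …, xₙ₊₁` is an `M`-regular sequence in `p`, and the depth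
hypothesis yields an `R`-regular sequence of length `n + 1` in `p`. By Rees' theorem
`Ext^i(R/p, R) = 0` for `i ≤ n`; the long exact `Ext` sequences of multiplication by
`x₁, …, xₙ` then give `Hom(R/p, R/(x₁, …, xₙ)) = 0`, contradicting that `p` is associated.
-/

open RingTheory.Sequence IsLocalRing CategoryTheory CategoryTheory.Limits
open scoped TensorProduct

/-- The `I`-depth of the module `M`: the supremum of the lengths of
(weakly) regular sequences on `M` consisting of elements of `I`.
(When `IM ≠ M` this is the common length of maximal `M`-regular sequences in `I`;
when `IM = M`, in particular when `M = 0`, it is `∞`, matching the usual convention.) -/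
noncomputable def rdepth {R : Type*} [CommRing R] (I : Ideal R)
    (M : Type*) [AddCommGroup M] [Module R M] : ℕ∞ :=
  sSup {n : ℕ∞ | ∃ rs : List R, (rs.length : ℕ∞) = n ∧ (∀ r ∈ rs, r ∈ I) ∧
    RingTheory.Sequence.IsWeaklyRegular M rs}

open Abelian Pointwise

universe u

section Depth

variable {R : Type*} [CommRing R] {I : Ideal R} {M : Type*} [AddCommGroup M] [Module R M]

theorem length_le_rdepth {rs : List R} (hI : ∀ r ∈ rs, r ∈ I) (hrs : IsWeaklyRegular M rs) :
    (rs.length : ℕ∞) ≤ rdepth I M :=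
  le_sSup ⟨rs, rfl, hI, hrs⟩

theorem exists_isWeaklyRegular_of_lt_rdepth {n : ℕ} (h : (n : ℕ∞) < rdepth I M) :
    ∃ rs : List R, n < rs.length ∧ (∀ r ∈ rs, r ∈ I) ∧ IsWeaklyRegular M rs := by
  obtain ⟨_, ⟨rs, rfl, hI, hrs⟩, hlt⟩ := lt_sSup_iff.mp h
  exact ⟨rs, by exact_mod_cast hlt, hI, hrs⟩

end Depth

section AssociatedPrimes

variable {R : Type*} [CommRing R] {M : Type*} [AddCommGroup M] [Module R M]

theorem exists_mem_associatedPrimes_of_not_isSMulRegular [IsNoetherianRing R] {x : R}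
    (hx : ¬IsSMulRegular M x) : ∃ p ∈ associatedPrimes R M, x ∈ p := by
  have hx' : x ∈ ⋃ p ∈ associatedPrimes R M, (p : Set R) := by
    rw [biUnion_associatedPrimes_eq_compl_regular]
    exact hx
  simpa using hx'

theorem le_of_mem_associatedPrimes_quotient_smul_top {I p : Ideal R}
    (hp : p ∈ associatedPrimes R (M ⧸ I • (⊤ : Submodule R M))) : I ≤ p := by
  intro r hr
  apply hp.annihilator_le
  rw [Submodule.annihilator_top, Submodule.annihilator_quotient]
  exact Submodule.mem_colon.mpr fun m _ => Submodule.smul_mem_smul hr trivial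

end AssociatedPrimes

namespace ModuleCat

variable {R : Type u} [CommRing R]

theorem subsingleton_ext_quotSMulTop {N M : ModuleCat.{u} R} {x : R} (hx : IsSMulRegular M x)
    {i : ℕ} (h : Subsingleton (Ext N M i)) (h' : Subsingleton (Ext N M (i + 1))) :
    Subsingleton (Ext N (ModuleCat.of R (QuotSMulTop x M)) i) :=
  AddCommGrpCat.subsingleton_of_isZero <| ShortComplex.Exact.isZero_of_both_zeros
    (Ext.covariant_sequence_exact₃' N hx.smulShortComplex_shortExact i (i + 1) rfl)
    ((AddCommGrpCat.isZero_of_iff_subsingleton.mpr h).eq_zero_of_src _)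
    ((AddCommGrpCat.isZero_of_iff_subsingleton.mpr h').eq_zero_of_tgt _)

theorem subsingleton_linearMap_quotient_of_subsingleton_ext (N M : ModuleCat.{u} R)
    {rs : List R} (hrs : IsWeaklyRegular M rs) (h : ∀ i ≤ rs.length, Subsingleton (Ext N M i)) :
    Subsingleton (N →ₗ[R] M ⧸ Ideal.ofList rs • (⊤ : Submodule R M)) := by
  induction rs generalizing M with
  | nil =>
    have : Subsingleton (N →ₗ[R] M) :=
      (Ext.addEquiv₀.trans ModuleCat.homAddEquiv).subsingleton_congr.mp (h 0 le_rfl)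
    exact (LinearEquiv.arrowCongr (LinearEquiv.refl R N)
      (Submodule.quotEquivOfEqBot _ (by rw [Ideal.ofList_nil, Submodule.bot_smul]))).subsingleton
  | cons x rs ih =>
    obtain ⟨hx, hrs⟩ := (isWeaklyRegular_cons_iff M x rs).mp hrs
    have := ih (ModuleCat.of R (QuotSMulTop x M)) hrs fun i hi =>
      subsingleton_ext_quotSMulTop hx (h i (Nat.le_succ_of_le hi)) (h (i + 1) (Nat.succ_le_succ hi))
    exact (LinearEquiv.arrowCongr (LinearEquiv.refl R N)
      (Submodule.quotOfListConsSMulTopEquivQuotSMulTopInner M x rs)).subsingleton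

end ModuleCat

section Noetherian

variable {R : Type u} [CommRing R] [IsNoetherianRing R]

theorem length_le_of_mem_associatedPrimes_quotient {p : Ideal R} {rs ys : List R}
    (hp : p ∈ associatedPrimes R (R ⧸ Ideal.ofList rs • (⊤ : Submodule R R)))
    (hrs : IsWeaklyRegular R rs) (hys : IsWeaklyRegular R ys) (hysp : ∀ y ∈ ys, y ∈ p) :
    ys.length ≤ rs.length := by
  obtain ⟨hprime, f, hf⟩ := (isAssociatedPrime_iff_exists_injective_linearMap _ _).mp hp
  have hp_smul_top : p • (⊤ : Submodule R R) = p := by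
    rw [Ideal.smul_eq_mul, Ideal.mul_top]
  have hys_regular : IsRegular R ys := by
    refine ⟨hys, fun htop => hprime.ne_top (top_le_iff.mp ?_)⟩
    calc ⊤ = Ideal.ofList ys • (⊤ : Submodule R R) := htop
      _ ≤ p • ⊤ := Submodule.smul_mono_left (Ideal.span_le.mpr hysp)
      _ = p := hp_smul_top
  have hext := ModuleCat.subsingleton_ext_of_exists_isRegular p (ModuleCat.of R (R ⧸ p))
    (by rw [Module.support_eq_zeroLocus, Ideal.annihilator_quotient]) (ModuleCat.of R R)
    (hp_smul_top.trans_lt hprime.ne_top.lt_top) ys hysp hys_regular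
  by_contra! hlt
  have := ModuleCat.subsingleton_linearMap_quotient_of_subsingleton_ext (ModuleCat.of R (R ⧸ p))
    (ModuleCat.of R R) hrs fun i hi => hext i (by omega)
  have : Nontrivial (R ⧸ p) := Ideal.Quotient.nontrivial_iff.mpr hprime.ne_top
  exact one_ne_zero (hf (by rw [Subsingleton.elim f 0]; rfl))

theorem isWeaklyRegular_of_forall_rdepth_le (M : Type*) [AddCommGroup M] [Module R M]
    (h : ∀ I : Ideal R, rdepth I M ≤ rdepth I R) {rs : List R} (hrs : IsWeaklyRegular M rs) :
    IsWeaklyRegular R rs := by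
  induction rs using List.reverseRecOn with
  | nil => exact IsWeaklyRegular.nil R R
  | append_singleton rs x ih =>
    obtain ⟨hrsM, -⟩ := (isWeaklyRegular_append_iff M rs [x]).mp hrs
    have hrsR := ih hrsM
    refine (isWeaklyRegular_append_iff R rs [x]).mpr
      ⟨hrsR, (isWeaklyRegular_singleton_iff _ x).mpr ?_⟩
    by_contra hx
    obtain ⟨p, hp, hxp⟩ := exists_mem_associatedPrimes_of_not_isSMulRegular hx
    have hrsp : ∀ r ∈ rs, r ∈ p := fun r hr =>
      le_of_mem_associatedPrimes_quotient_smul_top hp (Ideal.subset_span hr)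
    have hdepth : ((rs ++ [x]).length : ℕ∞) ≤ rdepth p R :=
      (length_le_rdepth (by simpa [or_imp, forall_and] using ⟨hrsp, hxp⟩) hrs).trans (h p)
    obtain ⟨ys, hlen, hysp, hys⟩ := exists_isWeaklyRegular_of_lt_rdepth (n := rs.length)
      (lt_of_lt_of_le (Nat.cast_lt.mpr (by simp)) hdepth)
    exact (length_le_of_mem_associatedPrimes_quotient hp hrsR hys hysp).not_gt hlen

end Noetherian

theorem stmt1_general {R : Type*} [CommRing R] [IsNoetherianRing R] [IsLocalRing R]
    (M : Type*) [AddCommGroup M] [Module R M]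
    (h : ∀ I : Ideal R, rdepth I M ≤ rdepth I R) :
    ∀ rs : List R, (∀ x ∈ rs, x ∈ maximalIdeal R) →
      RingTheory.Sequence.IsRegular M rs → RingTheory.Sequence.IsRegular R rs :=
  fun _ hmem hrs => (IsLocalRing.isRegular_iff_isWeaklyRegular_of_subset_maximalIdeal hmem).mpr
    (isWeaklyRegular_of_forall_rdepth_le M h hrs.toIsWeaklyRegular)

/-- If `depth_R(I, M) ≤ depth_R(I, R)` for every ideal `I`, then every `M`-regular
sequence of elements of the maximal ideal is also an `R`-regular sequence. -/
theorem stmt1 {R : Type*} [CommRing R] [IsNoetherianRing R] [IsLocalRing R]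
    (M : Type*) [AddCommGroup M] [Module R M] [Module.Finite R M] [Nontrivial M]
    (h : ∀ I : Ideal R, rdepth I M ≤ rdepth I R) :
    ∀ rs : List R, (∀ x ∈ rs, x ∈ maximalIdeal R) →
      RingTheory.Sequence.IsRegular M rs → RingTheory.Sequence.IsRegular R rs :=
  stmt1_general M h
end

section
/- Let R = k[[x,y]]/(xy), p = (x), q = (y). Then p ⊗_R q ≅ k as R-modules; in particular, p ⊗_R q is not a reflexive R-module. -/
open RingTheory.Sequence IsLocalRing CategoryTheory CategoryTheory.Limits
open scoped TensorProduct

/-!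
Let `R = A ⧸ (a b)` with `a`, `b` nonzerodivisors of `A`. The annihilator of `a` in `R` is
`(b)` and vice versa, so `(a) ≅ R ⧸ (b)`, `(b) ≅ R ⧸ (a)` and
`(a) ⊗ (b) ≅ R ⧸ (b) ⊗ R ⧸ (a) ≅ R ⧸ (a, b)`.
If `b` is a nonzerodivisor modulo `a`, only `0` is killed by both `a` and `b`, so every
`R`-linear form on `R ⧸ (a, b)` vanishes. When `(a, b)` is proper the module `(a) ⊗ (b)` is
therefore nonzero with zero dual, and cannot be reflexive. For `A = k⟦x, y⟧`, `a = x`, `b = y`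
these hypotheses are read off from coefficients.
-/

open scoped nonZeroDivisors

namespace Ideal

variable {R : Type*} [CommRing R]

theorem smul_top_quotient_eq_map_mkQ (I J : Ideal R) :
    I • (⊤ : Submodule R (R ⧸ J)) = Submodule.map J.mkQ I := by
  rw [smul_top_eq_map]
  ext z
  simp [mem_map_iff_of_surjective _ Quotient.mk_surjective]

noncomputable def quotTensorQuotEquivQuotSup (I J : Ideal R) :
    (R ⧸ I) ⊗[R] (R ⧸ J) ≃ₗ[R] R ⧸ (I ⊔ J) :=
  TensorProduct.quotTensorEquivQuotSMul (R ⧸ J) I ≪≫ₗ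
    Submodule.quotEquivOfEq _ _ (smul_top_quotient_eq_map_mkQ I J) ≪≫ₗ
    Submodule.quotientQuotientEquivQuotientSup J I ≪≫ₗ
    Submodule.quotEquivOfEq _ _ (sup_comm J I)

noncomputable def spanSingletonTensorEquivQuotSpanPair {u v : R}
    (hu : torsionOf R R u = span {v}) (hv : torsionOf R R v = span {u}) :
    (span {u} ⊗[R] span {v}) ≃ₗ[R] R ⧸ span {u, v} :=
  TensorProduct.congr
      ((quotTorsionOfEquivSpanSingleton R R u).symm ≪≫ₗ Submodule.quotEquivOfEq _ _ hu)
      ((quotTorsionOfEquivSpanSingleton R R v).symm ≪≫ₗ Submodule.quotEquivOfEq _ _ hv) ≪≫ₗ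
    quotTensorQuotEquivQuotSup _ _ ≪≫ₗ
    Submodule.quotEquivOfEq _ _ (by rw [span_insert, sup_comm])

theorem subsingleton_dual_quotient {I : Ideal R} (hI : Submodule.annihilator I = ⊥) :
    Subsingleton (Module.Dual R (R ⧸ I)) := by
  refine ⟨fun φ ψ ↦ Submodule.linearMap_qext _ (LinearMap.ext_ring ?_)⟩
  have h (χ : Module.Dual R (R ⧸ I)) : χ (I.mkQ 1) = 0 := by
    rw [← Submodule.mem_bot R, ← hI, Submodule.mem_annihilator]
    intro a ha
    rw [smul_eq_mul, mul_comm, ← smul_eq_mul, ← map_smul, ← map_smul, smul_eq_mul, mul_one,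
      Submodule.mkQ_apply, (Submodule.Quotient.mk_eq_zero I).mpr ha, map_zero]
  simp only [LinearMap.comp_apply, h]

end Ideal

namespace Module

variable {R : Type*} [CommRing R]

theorem not_injective_dual_eval_of_subsingleton_dual (M : Type*) [AddCommGroup M] [Module R M]
    [Nontrivial M] [Subsingleton (Dual R M)] :
    ¬ Function.Injective (Dual.eval R M) := by
  intro h
  obtain ⟨m, n, hmn⟩ := exists_pair_ne M
  exact hmn (h (Subsingleton.elim _ _))

theorem not_bijective_dual_eval_of_equiv_quotient {M : Type*} [AddCommGroup M] [Module R M]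
    {I : Ideal R} (hI : I ≠ ⊤) (hann : Submodule.annihilator I = ⊥) (e : M ≃ₗ[R] R ⧸ I) :
    ¬ Function.Bijective (Dual.eval R M) := by
  have : Nontrivial (R ⧸ I) := Ideal.Quotient.nontrivial_iff.mpr hI
  have : Nontrivial M := e.toEquiv.nontrivial
  have : Subsingleton (Dual R (R ⧸ I)) := Ideal.subsingleton_dual_quotient hann
  have : Subsingleton (Dual R M) := e.symm.dualMap.toEquiv.subsingleton
  exact fun h ↦ not_injective_dual_eval_of_subsingleton_dual M h.injective

end Module

namespace Ideal.Quotient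

variable {A : Type*} [CommRing A] {a b : A}

/- Stated for any `I = (b a)` rather than for the quotient by `(b a)` itself, so that it applies
to both factors of the same ideal `(a b)`. -/
theorem torsionOf_mk_eq_span_mk {I : Ideal A} (hI : I = span {b * a}) (ha : a ∈ A⁰) :
    torsionOf (A ⧸ I) (A ⧸ I) (mk I a) = span {mk I b} := by
  subst hI
  ext z
  obtain ⟨r, rfl⟩ := mk_surjective z
  have hle : span {b * a} ≤ span {b} := span_singleton_le_span_singleton.mpr (dvd_mul_right b a)
  have hspan : span {mk (span {b * a}) b} = (span {b}).map (mk _) := by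
    rw [map_span, Set.image_singleton]
  rw [mem_torsionOf_iff, smul_eq_mul, ← map_mul, eq_zero_iff_mem, mem_span_singleton,
    dvd_cancel_right_mem_nonZeroDivisors ha, hspan, mem_quotient_iff_mem_sup, sup_eq_left.mpr hle,
    mem_span_singleton]

theorem eq_zero_of_mul_mk_eq_zero (ha : a ∈ A⁰) (hb : b ∈ A⁰) (hab : ∀ c, a ∣ c * b → a ∣ c)
    {r : A ⧸ span {a * b}} (hra : r * mk _ a = 0) (hrb : r * mk _ b = 0) : r = 0 := by
  obtain ⟨r, rfl⟩ := mk_surjective r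
  rw [← map_mul, eq_zero_iff_mem, mem_span_singleton] at hra hrb
  rw [eq_zero_iff_mem, mem_span_singleton]
  obtain ⟨c, rfl⟩ : b ∣ r := by rwa [mul_comm a, dvd_cancel_right_mem_nonZeroDivisors ha] at hra
  obtain ⟨d, rfl⟩ : a ∣ c := hab c <| by
    rwa [mul_comm b c, dvd_cancel_right_mem_nonZeroDivisors hb] at hrb
  exact ⟨d, by ring⟩

theorem span_pair_mk_ne_top (h : span {a, b} ≠ ⊤) :
    span {mk (span {a * b}) a, mk _ b} ≠ ⊤ := by
  have hle : span {a * b} ≤ span {a, b} :=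
    span_singleton_le_iff_mem _ |>.mpr (mul_mem_right b _ (subset_span (by simp)))
  rw [Ne, eq_top_iff_one, ← map_one (mk _), ← Set.image_pair, ← map_span,
    mem_quotient_iff_mem_sup, sup_eq_left.mpr hle, ← eq_top_iff_one]
  exact h

noncomputable def spanMkTensorSpanMkEquiv (ha : a ∈ A⁰) (hb : b ∈ A⁰) :
    (span {mk (span {a * b}) a} ⊗[A ⧸ span {a * b}] span {mk (span {a * b}) b})
      ≃ₗ[A ⧸ span {a * b}] (A ⧸ span {a * b}) ⧸ span {mk _ a, mk _ b} :=
  spanSingletonTensorEquivQuotSpanPair (torsionOf_mk_eq_span_mk (by rw [mul_comm]) ha)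
    (torsionOf_mk_eq_span_mk rfl hb)

theorem not_bijective_dual_eval_spanMk_tensor_spanMk (ha : a ∈ A⁰) (hb : b ∈ A⁰)
    (hab : ∀ c, a ∣ c * b → a ∣ c) (h : span {a, b} ≠ ⊤) :
    ¬ Function.Bijective (Module.Dual.eval (A ⧸ span {a * b})
      (span {mk (span {a * b}) a} ⊗[A ⧸ span {a * b}] span {mk (span {a * b}) b})) := by
  refine Module.not_bijective_dual_eval_of_equiv_quotient (span_pair_mk_ne_top h)
    (eq_bot_iff.mpr fun r hr ↦ ?_) (spanMkTensorSpanMkEquiv ha hb)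
  rw [Submodule.mem_annihilator] at hr
  exact eq_zero_of_mul_mk_eq_zero ha hb hab (hr _ (subset_span (by simp)))
    (hr _ (subset_span (by simp)))

end Ideal.Quotient

namespace MvPowerSeries

variable {σ R : Type*} [CommSemiring R]

theorem X_dvd_of_dvd_mul_X {i j : σ} (hij : i ≠ j) {φ : MvPowerSeries σ R}
    (h : X j ∣ φ * X i) : X j ∣ φ := by
  rw [X_dvd_iff] at h ⊢
  intro m hm
  have := h (m + Finsupp.single i 1) (by simp [hm, Finsupp.single_eq_of_ne' hij])
  rwa [X_def, coeff_add_mul_monomial, mul_one] at this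

theorem span_X_X_ne_top [Nontrivial R] (i j : σ) :
    Ideal.span {X i, X j} ≠ (⊤ : Ideal (MvPowerSeries σ R)) :=
  ne_top_of_le_ne_top (RingHom.ker_ne_top (constantCoeff (σ := σ) (R := R))) <| by
    simp [Ideal.span_le, Set.insert_subset_iff]

end MvPowerSeries

set_option synthInstance.maxHeartbeats 1000000 in
set_option maxHeartbeats 1000000 in
/-- In `R = k[[x,y]]/(xy)` with minimal primes `p = (x)` and `q = (y)`:
`p ⊗_R q ≅ R/(x,y) (≅ k)`, and in particular `p ⊗_R q` is not reflexive. -/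
theorem stmt11 {k : Type*} [Field k]
    (x y :
      MvPowerSeries (Fin 2) k ⧸
        Ideal.span {(MvPowerSeries.X 0 * MvPowerSeries.X 1 : MvPowerSeries (Fin 2) k)})
    (hx : x = Ideal.Quotient.mk _ (MvPowerSeries.X 0))
    (hy : y = Ideal.Quotient.mk _ (MvPowerSeries.X 1)) :
    Nonempty
      ((↥(Ideal.span {x}) ⊗[MvPowerSeries (Fin 2) k ⧸
          Ideal.span {(MvPowerSeries.X 0 * MvPowerSeries.X 1 : MvPowerSeries (Fin 2) k)}]
        ↥(Ideal.span {y})) ≃ₗ[MvPowerSeries (Fin 2) k ⧸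
          Ideal.span {(MvPowerSeries.X 0 * MvPowerSeries.X 1 : MvPowerSeries (Fin 2) k)}]
        (_ ⧸ (Ideal.span {x, y}))) ∧
    ¬ Function.Bijective
        (Module.Dual.eval
          (MvPowerSeries (Fin 2) k ⧸
            Ideal.span {(MvPowerSeries.X 0 * MvPowerSeries.X 1 : MvPowerSeries (Fin 2) k)})
          (↥(Ideal.span {x}) ⊗[MvPowerSeries (Fin 2) k ⧸
            Ideal.span {(MvPowerSeries.X 0 * MvPowerSeries.X 1 : MvPowerSeries (Fin 2) k)}]
          ↥(Ideal.span {y}))) := by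
  subst hx hy
  have hX0 := MvPowerSeries.X_mem_nonzeroDivisors (σ := Fin 2) (R := k) (i := 0)
  have hX1 := MvPowerSeries.X_mem_nonzeroDivisors (σ := Fin 2) (R := k) (i := 1)
  exact ⟨⟨Ideal.Quotient.spanMkTensorSpanMkEquiv hX0 hX1⟩,
    Ideal.Quotient.not_bijective_dual_eval_spanMk_tensor_spanMk hX0 hX1
      (fun _ ↦ MvPowerSeries.X_dvd_of_dvd_mul_X (by decide)) (MvPowerSeries.span_X_X_ne_top 0 1)⟩
end

section
/- Let R be a commutative Noetherian local ring and let M be a nonzero finitely generated Tor-rigid R-module. Then every M-regular element of the maximal ideal is a nonzerodivisor on R. -/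
open RingTheory.Sequence IsLocalRing CategoryTheory CategoryTheory.Limits
open scoped TensorProduct

/-!
Let `J = ker (x : R → R)` be the annihilator of `x`. Resolving `R/xR` as
`⋯ → P₂ → R —x→ R → R/xR` with `P₂ ↠ J`, the complex `M ⊗ P` computes `Tor(M, R/xR)`.
Since `x` is `M`-regular, `M —x→ M` is injective, so `Tor₁ = 0`, and rigidity gives `Tor₂ = 0`.
On the other hand `x J = 0` and `x` is `M`-regular, so `J M = 0` and `M ⊗ J → M ⊗ R` vanishes;
exactness of `M ⊗ P` at `P₂` then makes `M ⊗ P₃ → M ⊗ P₂` surjective; since it dies in `M ⊗ J`,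
the surjection `M ⊗ P₂ ↠ M ⊗ J` is zero and `M ⊗ J = 0`. By Nakayama a tensor product of
nonzero finite modules over a local ring is nonzero, so `J = 0`.
-/

universe u

section Regular

variable {R M : Type*} [CommRing R] [AddCommGroup M] [Module R M] {x : R}

lemma IsSMulRegular.ker_lsmul_le_annihilator (hx : IsSMulRegular M x) :
    LinearMap.ker (LinearMap.lsmul R R x) ≤ Module.annihilator R M := by
  intro r (hr : x * r = 0)
  refine Module.mem_annihilator.2 fun m ↦ hx ?_
  simp only [smul_zero, smul_smul, hr, zero_smul]

lemma IsSMulRegular.lTensor_lsmul_injective (hx : IsSMulRegular M x) :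
    Function.Injective ((LinearMap.lsmul R R x).lTensor M) := by
  rw [LinearMap.lsmul_eq_distribSMultoLinearMap, LinearMap.lTensor_smul_action]
  exact hx.rTensor R

lemma LinearMap.lTensor_subtype_eq_zero_of_le_annihilator {I : Ideal R}
    (hI : I ≤ Module.annihilator R M) : I.subtype.lTensor M = 0 := by
  ext m i
  change m ⊗ₜ[R] (i : R) = 0
  rw [← mul_one (i : R), ← smul_eq_mul, ← TensorProduct.smul_tmul,
    Module.mem_annihilator.1 (hI i.2), TensorProduct.zero_tmul]

end Regular

theorem IsLocalRing.nontrivial_tensorProduct {R M N : Type*} [CommRing R] [IsLocalRing R]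
    [AddCommGroup M] [Module R M] [Module.Finite R M] [Nontrivial M]
    [AddCommGroup N] [Module R N] [Module.Finite R N] [Nontrivial N] :
    Nontrivial (M ⊗[R] N) := by
  let k := ResidueField R
  have : Nontrivial (k ⊗[R] M) := by
    rw [← not_subsingleton_iff_nontrivial, subsingleton_tensorProduct]; exact not_subsingleton M
  have : Nontrivial (k ⊗[R] N) := by
    rw [← not_subsingleton_iff_nontrivial, subsingleton_tensorProduct]; exact not_subsingleton N
  obtain ⟨v, hv⟩ := exists_ne (0 : k ⊗[R] N)
  have : Nontrivial ((k ⊗[R] M) ⊗[k] (k ⊗[R] N)) :=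
    TensorProduct.nontrivial_of_linearMap_injective_of_flat_left k _ _
      (LinearMap.toSpanSingleton k _ v) (smul_left_injective k hv)
  have : Nontrivial (k ⊗[R] (M ⊗[R] N)) :=
    (TensorProduct.AlgebraTensorModule.distribBaseChange R k M N).nontrivial_congr.mpr this
  rw [← not_subsingleton_iff_nontrivial, ← subsingleton_tensorProduct (R := R)]
  exact not_subsingleton _

namespace CategoryTheory.ProjectiveResolution

variable {C D : Type*} [Category* C] [Category* D] [Abelian C] [Abelian D]
  [HasProjectiveResolutions C] {X : C} (P : ProjectiveResolution X) (F : C ⥤ D) [F.Additive]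

lemma isZero_leftDerived_obj_iff_exactAt (n : ℕ) :
    IsZero ((F.leftDerived n).obj X) ↔ ((F.mapHomologicalComplex _).obj P.complex).ExactAt n :=
  (P.isoLeftDerivedObj F n).isZero_iff.trans
    (HomologicalComplex.exactAt_iff_isZero_homology _ n).symm

lemma isZero_leftDerived_one_of_mono [Mono (F.map (P.complex.d 1 0))] :
    IsZero ((F.leftDerived 1).obj X) := by
  rw [P.isZero_leftDerived_obj_iff_exactAt,
    HomologicalComplex.exactAt_iff' _ 2 1 0 (by simp) (by simp)]
  refine (ShortComplex.exact_iff_mono _ ?_).2 (inferInstanceAs (Mono (F.map (P.complex.d 1 0))))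
  change F.map (P.complex.d 2 1) = 0
  rw [← cancel_mono (F.map (P.complex.d 1 0)), zero_comp, ← F.map_comp, P.complex.d_comp_d,
    F.map_zero]

lemma isZero_obj_kernel_of_isZero_leftDerived_two [F.PreservesEpimorphisms]
    (hι : F.map (kernel.ι (P.complex.d 1 0)) = 0) (h₂ : IsZero ((F.leftDerived 2).obj X)) :
    IsZero (F.obj (kernel (P.complex.d 1 0))) := by
  rw [P.isZero_leftDerived_obj_iff_exactAt,
    HomologicalComplex.exactAt_iff' _ 3 2 1 (by simp) (by simp)] at h₂
  let p := kernel.lift _ _ (P.complex.d_comp_d 2 1 0)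
  have : Epi p := (P.exact_succ 0).epi_kernelLift
  have hd : F.map (P.complex.d 2 1) = 0 := by
    rw [← kernel.lift_ι _ _ (P.complex.d_comp_d 2 1 0), F.map_comp, hι, comp_zero]
  have : Epi (F.map (P.complex.d 3 2)) := h₂.epi_f hd
  have hdp : P.complex.d 3 2 ≫ p = 0 := by
    rw [← cancel_mono (kernel.ι _), Category.assoc, kernel.lift_ι, P.complex.d_comp_d, zero_comp]
  refine IsZero.of_epi_eq_zero (F.map p) ?_
  rw [← cancel_epi (F.map (P.complex.d 3 2)), ← F.map_comp, hdp, F.map_zero, comp_zero]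

end CategoryTheory.ProjectiveResolution

namespace ModuleCat

open Projective

variable {R : Type u} [Ring R] {P₀ P₁ Z : ModuleCat.{u} R} (f : P₁ ⟶ P₀)

lemma projective_d_comp {X Y : ModuleCat.{u} R} (g : X ⟶ Y) : d g ≫ g = 0 :=
  (Category.assoc _ _ _).trans (by rw [kernel.condition]; exact comp_zero)

noncomputable def presentationComplex : ChainComplex (ModuleCat.{u} R) ℕ :=
  ChainComplex.mk P₀ P₁ (syzygies f) f (d f) (projective_d_comp f)
    (fun S => ⟨syzygies S.f, d S.f, projective_d_comp S.f⟩)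

lemma presentationComplex_d_1_0 : (presentationComplex f).d 1 0 = f :=
  ChainComplex.mk_d_1_0 ..

lemma presentationComplex_exactAt_succ (n : ℕ) :
    (presentationComplex f).ExactAt (n + 1) := by
  rw [HomologicalComplex.exactAt_iff' _ (n + 1 + 1) (n + 1) n (by simp) (by simp)]
  dsimp [presentationComplex, HomologicalComplex.sc', HomologicalComplex.shortComplexFunctor',
    ChainComplex.mk]
  simp only [ChainComplex.of.d, ↓reduceDIte, eqToHom_refl]
  cases n <;> apply exact_d_f

instance [Projective P₀] [Projective P₁] (n : ℕ) :
    Projective ((presentationComplex f).X n) := by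
  obtain (_ | _ | _ | n) := n
  · assumption
  · assumption
  all_goals apply Projective.projective_over

noncomputable def projectiveResolutionOfPresentation [Projective P₀] [Projective P₁]
    (π : P₀ ⟶ Z) (w : f ≫ π = 0) (hexact : (ShortComplex.mk f π w).Exact) [Epi π] :
    ProjectiveResolution Z where
  complex := presentationComplex f
  π := (ChainComplex.toSingle₀Equiv _ _).symm ⟨π, by rw [presentationComplex_d_1_0]; exact w⟩
  quasiIso := ⟨fun n => by
    cases n with
    | zero =>
      rw [ChainComplex.quasiIsoAt₀_iff, ShortComplex.quasiIso_iff_of_zeros']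
      · refine (ShortComplex.exact_and_epi_g_iff_of_iso ?_).2 ⟨hexact, ‹_›⟩
        refine ShortComplex.isoMk (Iso.refl _) (Iso.refl _) (Iso.refl _) ?_ ?_
        · exact (Category.id_comp _).trans (Category.comp_id _).symm
        · exact (Category.id_comp _).trans (Category.comp_id _).symm
      all_goals rfl
    | succ n =>
      rw [quasiIsoAt_iff_exactAt']
      · apply presentationComplex_exactAt_succ
      · apply ChainComplex.exactAt_succ_single_obj⟩

end ModuleCat

namespace Ideal

variable {R : Type u} [CommRing R] (x : R)

lemma exact_lsmul_mkQ_span_singleton :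
    Function.Exact (LinearMap.lsmul R R x) (Ideal.span {x}).mkQ := by
  intro r
  rw [Submodule.mkQ_apply, Submodule.Quotient.mk_eq_zero, Ideal.mem_span_singleton']
  simp [mul_comm x]

noncomputable def quotientSpanSingletonResolution :
    ProjectiveResolution (ModuleCat.of R (R ⧸ Ideal.span {x})) :=
  have : Epi (ModuleCat.ofHom (Ideal.span {x}).mkQ) :=
    (ModuleCat.epi_iff_surjective _).2 (Submodule.mkQ_surjective _)
  ModuleCat.projectiveResolutionOfPresentation (ModuleCat.ofHom (LinearMap.lsmul R R x))
    (ModuleCat.ofHom (Ideal.span {x}).mkQ)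
    (ModuleCat.hom_ext (exact_lsmul_mkQ_span_singleton x).linearMap_comp_eq_zero)
    (ModuleCat.shortComplex_exact _ (exact_lsmul_mkQ_span_singleton x))

lemma quotientSpanSingletonResolution_complex_d_1_0 :
    (quotientSpanSingletonResolution x).complex.d 1 0 = ModuleCat.ofHom (LinearMap.lsmul R R x) :=
  ModuleCat.presentationComplex_d_1_0 _

end Ideal

namespace ModuleCat

open MonoidalCategory

variable {R : Type u} [CommRing R] (M : Type u) [AddCommGroup M] [Module R M]

lemma tensoringLeft_map_kernel_ι_eq_zero {B : ModuleCat.{u} R} (g : ModuleCat.of R R ⟶ B)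
    (hg : LinearMap.ker g.hom ≤ Module.annihilator R M) :
    ((tensoringLeft _).obj (ModuleCat.of R M)).map (kernel.ι g) = 0 := by
  rw [← kernelIsoKer_hom_ker_subtype, Functor.map_comp]
  convert comp_zero
  exact hom_ext (LinearMap.lTensor_subtype_eq_zero_of_le_annihilator hg)

lemma subsingleton_tensorProduct_ker {A B : ModuleCat.{u} R} (g : A ⟶ B)
    (h : IsZero (((tensoringLeft _).obj (ModuleCat.of R M)).obj (kernel g))) :
    Subsingleton (M ⊗[R] LinearMap.ker g.hom) :=
  isZero_iff_subsingleton.1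
    (h.of_iso (((tensoringLeft _).obj (ModuleCat.of R M)).mapIso (kernelIsoKer g)).symm)

end ModuleCat

/-- If `M` is a nonzero finitely generated Tor-rigid module over a Noetherian local ring,
then every `M`-regular element of the maximal ideal is a nonzerodivisor on `R`. -/
theorem stmt14 {R : Type u} [CommRing R] [IsNoetherianRing R] [IsLocalRing R]
    (M : Type u) [AddCommGroup M] [Module R M] [Module.Finite R M] [Nontrivial M]
    (hrigid : ∀ (N : Type u) [AddCommGroup N] [Module R N] [Module.Finite R N],
      IsZero (((Tor (ModuleCat R) 1).obj (ModuleCat.of R M)).obj (ModuleCat.of R N)) →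
      IsZero (((Tor (ModuleCat R) 2).obj (ModuleCat.of R M)).obj (ModuleCat.of R N))) :
    ∀ x ∈ maximalIdeal R, IsSMulRegular M x → IsSMulRegular R x := by
  intro x _ hx
  let F := (MonoidalCategory.tensoringLeft (ModuleCat.{u} R)).obj (ModuleCat.of R M)
  let P := Ideal.quotientSpanSingletonResolution x
  have hd := Ideal.quotientSpanSingletonResolution_complex_d_1_0 x
  have hTor₁ : IsZero ((F.leftDerived 1).obj (ModuleCat.of R (R ⧸ Ideal.span {x}))) := by
    have : Mono (F.map (P.complex.d 1 0)) := by
      rw [hd, ModuleCat.mono_iff_injective]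
      exact hx.lTensor_lsmul_injective
    exact P.isZero_leftDerived_one_of_mono F
  have hι : F.map (kernel.ι (P.complex.d 1 0)) = 0 :=
    ModuleCat.tensoringLeft_map_kernel_ι_eq_zero M _ (hd ▸ hx.ker_lsmul_le_annihilator)
  have hMJ : Subsingleton (M ⊗[R] LinearMap.ker (LinearMap.lsmul R R x)) := by
    have := ModuleCat.subsingleton_tensorProduct_ker M _
      (P.isZero_obj_kernel_of_isZero_leftDerived_two F hι (hrigid _ hTor₁))
    rwa [show (P.complex.d 1 0).hom = LinearMap.lsmul R R x from congrArg ModuleCat.Hom.hom hd]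
      at this
  have hJ : Subsingleton (LinearMap.ker (LinearMap.lsmul R R x)) :=
    not_nontrivial_iff_subsingleton.1 fun _ ↦
      not_nontrivial_iff_subsingleton.2 hMJ IsLocalRing.nontrivial_tensorProduct
  exact isSMulRegular_iff_right_eq_zero_of_smul.2 fun r hr ↦
    congrArg Subtype.val (Subsingleton.elim (⟨r, hr⟩ : LinearMap.ker (LinearMap.lsmul R R x)) 0)
end
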